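/- arXiv:2305.00569 — 2 statements merged into one kernel-verified Lean document; each statement's English description precedes it below -/
import Mathlib

section
/- For m = 2d + 3 = 11 and d = 4, the covering functional of the 4-dimensional crosspolytope satisfies γ_{11}^4(K^4) = 3/4. -/
open scoped BigOperators

/-- The `d`-dimensional crosspolytope: the unit ball of the ℓ¹-norm on ℝ^d. -/
def cross (d : ℕ) : Set (Fin d → ℝ) := {x | ∑ i, |x i| ≤ 1}

/-- The homCopy `λ • (cross d) + u` of the scaled crosspolytope. -/
def homCopy (d : ℕ) (lam : ℝ) (u : Fin d → ℝ) : Set (Fin d → ℝ) :=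
  (fun x => lam • x + u) '' cross d

/-- `cross d` can be covered by `m` translates of `lam • cross d`. -/
def Covers (d m : ℕ) (lam : ℝ) : Prop :=
  ∃ u : Fin m → (Fin d → ℝ), cross d ⊆ ⋃ i, homCopy d lam (u i)

/-- The vertices `±e₁, …, ±e_d` of the crosspolytope. -/
def crossVertices (d : ℕ) : Set (Fin d → ℝ) :=
  {v | ∃ i : Fin d, v = Pi.single i (1 : ℝ) ∨ v = -Pi.single i (1 : ℝ)}

/-- The facet centers `(ε₁/d, …, ε_d/d)`, `ε ∈ {−1,1}^d`, of the crosspolytope. -/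
def facetCenters (d : ℕ) : Set (Fin d → ℝ) :=
  {c | ∃ ε : Fin d → ℝ, (∀ i, ε i = 1 ∨ ε i = -1) ∧ c = fun i => ε i / d}

/-! ### Auxiliary definitions and lemmas -/

set_option maxHeartbeats 1000000
set_option synthInstance.maxSize 2000
set_option synthInstance.maxHeartbeats 1000000
set_option maxRecDepth 10000
set_option linter.unreachableTactic false
set_option linter.unusedTactic false

noncomputable def vtx' (i : Fin 4) (s : Bool) : Fin 4 → ℝ :=
  fun j => if j = i then (if s then 1 else -1) else 0

noncomputable def fc' (ε : Fin 4 → Bool) : Fin 4 → ℝ := fun j => (if ε j then 1 else -1) / 4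

def hd' (a b : Fin 4 → Bool) : ℕ := (Finset.univ.filter fun j => a j ≠ b j).card

def zv : Fin 4 → Bool := fun _ => false

lemma mem_homCopy' {lam : ℝ} (hlam : 0 < lam) (u y : Fin 4 → ℝ) :
    y ∈ homCopy 4 lam u ↔ ∑ j, |y j - u j| ≤ lam := by
  constructor
  · rintro ⟨x, hx, rfl⟩
    have h1 : ∀ j, |(lam • x + u) j - u j| = lam * |x j| := by
      intro j
      simp only [Pi.add_apply, Pi.smul_apply, smul_eq_mul, add_sub_cancel_right, abs_mul,
        abs_of_pos hlam]
    rw [Finset.sum_congr rfl fun j _ => h1 j, ← Finset.mul_sum]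
    exact mul_le_of_le_one_right hlam.le hx
  · intro h
    refine ⟨fun j => (y j - u j) / lam, ?_, ?_⟩
    · show ∑ j, |(y j - u j) / lam| ≤ 1
      simp only [abs_div, abs_of_pos hlam]
      rw [← Finset.sum_div, div_le_one hlam]
      exact h
    · funext j
      simp only [Pi.add_apply, Pi.smul_apply, smul_eq_mul]
      field_simp
      ring

lemma vtx_mem (i : Fin 4) (s : Bool) : vtx' i s ∈ cross 4 := by
  show ∑ j, |vtx' i s j| ≤ 1
  have h1 : ∀ j, |vtx' i s j| = if j = i then 1 else 0 := by
    intro j; unfold vtx'; by_cases h : j = i <;> cases s <;> simp [h]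
  rw [Finset.sum_congr rfl fun j _ => h1 j]
  simp

lemma fc_mem (ε : Fin 4 → Bool) : fc' ε ∈ cross 4 := by
  show ∑ j, |fc' ε j| ≤ 1
  have h1 : ∀ j, |fc' ε j| = 1/4 := by
    intro j; unfold fc'; cases ε j <;> norm_num
  rw [Finset.sum_congr rfl fun j _ => h1 j]
  simp

lemma tri (a b u : Fin 4 → ℝ) :
    ∑ j, |a j - b j| ≤ (∑ j, |a j - u j|) + ∑ j, |b j - u j| := by
  rw [← Finset.sum_add_distrib]
  refine Finset.sum_le_sum fun j _ => ?_
  have := abs_sub_le (a j) (u j) (b j)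
  rw [abs_sub_comm (u j) (b j)] at this
  exact this

lemma vdist {i i' : Fin 4} {s s' : Bool} (h : (i, s) ≠ (i', s')) :
    2 ≤ ∑ j, |vtx' i s j - vtx' i' s' j| := by
  rcases eq_or_ne i i' with rfl | hne
  · have hs : s ≠ s' := fun hs => h (by rw [hs])
    have h2 : (2:ℝ) ≤ |vtx' i s i - vtx' i s' i| := by
      unfold vtx'; cases s <;> cases s' <;> simp_all <;> norm_num
    exact le_trans h2
      (Finset.single_le_sum (f := fun j => |vtx' i s j - vtx' i s' j|)
        (fun j _ => abs_nonneg _) (Finset.mem_univ i))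
  · have h2 : ∑ j ∈ ({i, i'} : Finset (Fin 4)), |vtx' i s j - vtx' i' s' j|
        ≤ ∑ j, |vtx' i s j - vtx' i' s' j| :=
      Finset.sum_le_sum_of_subset_of_nonneg (Finset.subset_univ _) fun j _ _ => abs_nonneg _
    rw [Finset.sum_pair hne] at h2
    refine le_trans ?_ h2
    have e1 : |vtx' i s i - vtx' i' s' i| = 1 := by
      unfold vtx'; cases s <;> simp [hne] <;> norm_num
    have e2 : |vtx' i s i' - vtx' i' s' i'| = 1 := by
      unfold vtx'; cases s' <;> simp [hne.symm, Ne.symm hne] <;> norm_num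
    rw [e1, e2]; norm_num

lemma vfcdist (i : Fin 4) (s : Bool) (ε : Fin 4 → Bool) :
    3/2 ≤ ∑ j, |vtx' i s j - fc' ε j| := by
  rw [← Finset.sum_erase_add _ _ (Finset.mem_univ i)]
  have h1 : ∑ j ∈ Finset.univ.erase i, |vtx' i s j - fc' ε j| = 3 * (1/4) := by
    have hterm : ∀ j ∈ Finset.univ.erase i, |vtx' i s j - fc' ε j| = 1/4 := by
      intro j hj
      have hj' : j ≠ i := (Finset.mem_erase.mp hj).1
      unfold vtx' fc'; rw [if_neg hj']; cases ε j <;> norm_num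
    rw [Finset.sum_congr rfl hterm, Finset.sum_const,
      Finset.card_erase_of_mem (Finset.mem_univ i)]
    simp
  have h2 : (3:ℝ)/4 ≤ |vtx' i s i - fc' ε i| := by
    unfold vtx' fc'
    cases s <;> cases ε i <;> simp <;> exact le_abs.mpr (by norm_num)
  rw [h1]; linarith

lemma fcdist (ε δ : Fin 4 → Bool) :
    (hd' ε δ : ℝ) / 2 ≤ ∑ j, |fc' ε j - fc' δ j| := by
  have h1 : ∀ j, |fc' ε j - fc' δ j| = if ε j ≠ δ j then (1/2 : ℝ) else 0 := by
    intro j; unfold fc'; cases hε : ε j <;> cases hδ : δ j <;> norm_num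
  rw [Finset.sum_congr rfl fun j _ => h1 j, ← Finset.sum_filter, Finset.sum_const]
  unfold hd'
  simp [nsmul_eq_mul]
  ring_nf
  norm_num

theorem step : ∀ a : Fin 4 → Bool, hd' a zv ≤ 2 → a ≠ zv →
    ∀ b, hd' b zv ≤ 2 → b ≠ zv → hd' a b ≤ 2 → a ≠ b →
    ∀ c, hd' c zv ≤ 2 → c ≠ zv → hd' a c ≤ 2 → hd' b c ≤ 2 → a ≠ c → b ≠ c →
    ∀ d, hd' d zv ≤ 2 → d ≠ zv → hd' a d ≤ 2 → hd' b d ≤ 2 → hd' c d ≤ 2 → a ≠ d → b ≠ d → c ≠ d →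
    ∀ e, hd' e zv ≤ 2 → e ≠ zv → hd' a e ≤ 2 → hd' b e ≤ 2 → hd' c e ≤ 2 → hd' d e ≤ 2 →
      a = e ∨ b = e ∨ c = e ∨ d = e := by decide

lemma hd_xor (t a b : Fin 4 → Bool) :
    hd' (fun j => xor (a j) (t j)) (fun j => xor (b j) (t j)) = hd' a b := by
  unfold hd'
  congr 1
  apply Finset.filter_congr
  intro j _
  have : ∀ x y u : Bool, (xor x u ≠ xor y u ↔ x ≠ y) := by decide
  simp only [this, eq_iff_iff]

lemma kleit6 (S : Finset (Fin 4 → Bool)) (hp : ∀ a ∈ S, ∀ b ∈ S, hd' a b ≤ 2)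
    (hc : 6 ≤ S.card) : False := by
  have hne : S.Nonempty := Finset.card_pos.mp (by omega)
  obtain ⟨s0, hs0⟩ := hne
  set f : (Fin 4 → Bool) → (Fin 4 → Bool) := fun a j => xor (a j) (s0 j) with hf
  have finv : Function.Involutive f := by
    intro a; funext j
    have : ∀ x u : Bool, xor (xor x u) u = x := by decide
    simp [hf, this]
  set T := S.image f with hT
  have hTcard : 6 ≤ T.card := by
    rwa [hT, Finset.card_image_of_injective _ finv.injective]
  have hTd : ∀ a ∈ T, ∀ b ∈ T, hd' a b ≤ 2 := by
    intro a ha b hb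
    rw [hT, Finset.mem_image] at ha hb
    obtain ⟨a', ha', rfl⟩ := ha
    obtain ⟨b', hb', rfl⟩ := hb
    rw [hd_xor]
    exact hp a' ha' b' hb'
  have hzT : zv ∈ T := by
    rw [hT, Finset.mem_image]
    exact ⟨s0, hs0, by funext j; simp [hf, zv]⟩
  have hT' : 5 ≤ (T.erase zv).card := by
    rw [Finset.card_erase_of_mem hzT]; omega
  obtain ⟨E, hEsub, hEcard⟩ := Finset.exists_subset_card_eq (s := T.erase zv) (n := 5) hT'
  obtain ⟨a, E4, haE, rfl, hE4⟩ := Finset.card_eq_succ.mp (hEcard.trans (by norm_num : (5:ℕ) = 4+1))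
  obtain ⟨b, E3, hbE, rfl, hE3⟩ := Finset.card_eq_succ.mp (hE4.trans (by norm_num : (4:ℕ) = 3+1))
  obtain ⟨c, E2, hcE, rfl, hE2⟩ := Finset.card_eq_succ.mp (hE3.trans (by norm_num : (3:ℕ) = 2+1))
  obtain ⟨d, E1, hdE, rfl, hE1⟩ := Finset.card_eq_succ.mp (hE2.trans (by norm_num : (2:ℕ) = 1+1))
  obtain ⟨e, rfl⟩ := Finset.card_eq_one.mp hE1
  have hmem : ∀ x ∈ (insert a (insert b (insert c (insert d ({e} : Finset (Fin 4 → Bool))))) :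
      Finset (Fin 4 → Bool)), x ≠ zv ∧ x ∈ T := by
    intro x hx
    exact Finset.mem_erase.mp (hEsub hx)
  simp only [Finset.mem_insert, Finset.mem_singleton, not_or] at haE hbE hcE hdE
  have ma := hmem a (by simp)
  have mb := hmem b (by simp)
  have mc := hmem c (by simp)
  have md := hmem d (by simp)
  have me := hmem e (by simp)
  have key := step a (hTd a ma.2 zv hzT) ma.1
    b (hTd b mb.2 zv hzT) mb.1 (hTd a ma.2 b mb.2) haE.1
    c (hTd c mc.2 zv hzT) mc.1 (hTd a ma.2 c mc.2) (hTd b mb.2 c mc.2) haE.2.1 hbE.1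
    d (hTd d md.2 zv hzT) md.1 (hTd a ma.2 d md.2) (hTd b mb.2 d md.2) (hTd c mc.2 d md.2)
      haE.2.2.1 hbE.2.1 hcE.1
    e (hTd e me.2 zv hzT) me.1 (hTd a ma.2 e me.2) (hTd b mb.2 e me.2) (hTd c mc.2 e me.2)
      (hTd d md.2 e me.2)
  rcases key with h | h | h | h
  · exact haE.2.2.2 h
  · exact hbE.2.2 h
  · exact hcE.2 h
  · exact hdE h

/-- The centers of the covering: `(1/4)e_i` for `k = i < 4`, `-(1/4)e_i` for `k = i + 4 < 8`,
`0` for `k ∈ {8,9,10}`. -/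
noncomputable def ctr (k : Fin 11) : Fin 4 → ℝ :=
  fun j => if (j : ℕ) = (k : ℕ) then 1/4 else if (j : ℕ) + 4 = (k : ℕ) then -(1/4) else 0

lemma sum_split (x : Fin 4 → ℝ) (i : Fin 4) (c : ℝ) :
    ∑ j, |x j - (if j = i then c else 0)| = |x i - c| + ∑ j ∈ Finset.univ.erase i, |x j| := by
  rw [← Finset.sum_erase_add _ _ (Finset.mem_univ i), if_pos rfl, add_comm]
  congr 1
  refine Finset.sum_congr rfl fun j hj => ?_
  rw [if_neg (Finset.mem_erase.mp hj).1, sub_zero]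

lemma cap_bound {s t : ℝ} (hs : s ≤ 1) (ht : (s - 1/2)/2 ≤ t) :
    |t - 1/4| + (s - t) ≤ 3/4 := by
  rcases le_or_gt t (1/4) with h | h
  · rw [abs_of_nonpos (by linarith)]; linarith
  · rw [abs_of_pos (by linarith)]; linarith

lemma covers_ub : Covers 4 11 (3/4) := by
  refine ⟨ctr, fun x hx => ?_⟩
  have hx1 : ∑ j, |x j| ≤ 1 := hx
  set s := ∑ j, |x j| with hs
  rw [Set.mem_iUnion]
  rcases le_or_gt s (3/4) with hle | hgt
  · refine ⟨8, (mem_homCopy' (by norm_num) _ _).mpr ?_⟩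
    have hc : ∀ j : Fin 4, ctr 8 j = 0 := by
      intro j
      have hj := j.isLt
      unfold ctr
      rw [if_neg (by omega), if_neg (by omega)]
    calc ∑ j, |x j - ctr 8 j| = ∑ j, |x j| := by
          refine Finset.sum_congr rfl fun j _ => ?_; rw [hc j, sub_zero]
      _ ≤ 3/4 := hle
  · have hex : ∃ i : Fin 4, (s - 1/2)/2 ≤ |x i| := by
      by_contra hno
      push_neg at hno
      have hlt : s < ∑ _j : Fin 4, (s - 1/2)/2 :=
        hs ▸ Finset.sum_lt_sum_of_nonempty Finset.univ_nonempty fun j _ => hno j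
      rw [Finset.sum_const] at hlt
      simp only [Finset.card_univ, Fintype.card_fin, nsmul_eq_mul] at hlt
      linarith
    obtain ⟨i, hi⟩ := hex
    have herase : ∑ j ∈ Finset.univ.erase i, |x j| = s - |x i| := by
      have := Finset.sum_erase_add Finset.univ (fun j => |x j|) (Finset.mem_univ i)
      linarith [this]
    rcases le_or_gt 0 (x i) with hpos | hneg
    · refine ⟨⟨(i : ℕ), by omega⟩, (mem_homCopy' (by norm_num) _ _).mpr ?_⟩
      have hc : ∀ j : Fin 4, ctr ⟨(i : ℕ), by omega⟩ j = if j = i then 1/4 else 0 := by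
        intro j
        unfold ctr
        simp only [Fin.val_mk]
        by_cases h : j = i
        · subst h; rw [if_pos rfl, if_pos rfl]
        · rw [if_neg (fun hh => h (Fin.ext hh)), if_neg (by omega), if_neg h]
      calc ∑ j, |x j - ctr ⟨(i : ℕ), by omega⟩ j|
          = ∑ j, |x j - (if j = i then 1/4 else 0)| := by
            refine Finset.sum_congr rfl fun j _ => ?_; rw [hc j]
        _ = |x i - 1/4| + ∑ j ∈ Finset.univ.erase i, |x j| := sum_split x i (1/4)
        _ = |x i - 1/4| + (s - |x i|) := by rw [herase]
        _ ≤ 3/4 := by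
            rw [abs_of_nonneg hpos] at hi ⊢
            exact cap_bound hx1 hi
    · refine ⟨⟨(i : ℕ) + 4, by omega⟩, (mem_homCopy' (by norm_num) _ _).mpr ?_⟩
      have hc : ∀ j : Fin 4, ctr ⟨(i : ℕ) + 4, by omega⟩ j
          = if j = i then -(1/4) else 0 := by
        intro j
        unfold ctr
        simp only [Fin.val_mk]
        by_cases h : j = i
        · subst h; rw [if_neg (by omega), if_pos rfl]; simp
        · have : (j : ℕ) ≠ (i : ℕ) := fun hh => h (Fin.ext hh)
          rw [if_neg (by omega), if_neg (by omega), if_neg h]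
      have habs : |x i - (-(1/4))| = |(|x i| - 1/4)| := by
        rw [abs_of_neg hneg, ← abs_neg]
        congr 1; ring
      calc ∑ j, |x j - ctr ⟨(i : ℕ) + 4, by omega⟩ j|
          = ∑ j, |x j - (if j = i then -(1/4) else 0)| := by
            refine Finset.sum_congr rfl fun j _ => ?_; rw [hc j]
        _ = |x i - (-(1/4))| + ∑ j ∈ Finset.univ.erase i, |x j| := sum_split x i (-(1/4))
        _ = |(|x i| - 1/4)| + (s - |x i|) := by rw [herase, habs]
        _ ≤ 3/4 := cap_bound hx1 hi

lemma lb (μ : ℝ) (hμ0 : 0 < μ) (hμ : μ < 3/4) : ¬ Covers 4 11 μ := by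
  rintro ⟨u, hcov⟩
  have hv : ∀ p : Fin 4 × Bool, ∃ k : Fin 11, ∑ j, |vtx' p.1 p.2 j - u k j| ≤ μ := by
    intro p
    have := hcov (vtx_mem p.1 p.2)
    rw [Set.mem_iUnion] at this
    obtain ⟨k, hk⟩ := this
    exact ⟨k, (mem_homCopy' hμ0 _ _).mp hk⟩
  have hfc : ∀ ε : Fin 4 → Bool, ∃ k : Fin 11, ∑ j, |fc' ε j - u k j| ≤ μ := by
    intro ε
    have := hcov (fc_mem ε)
    rw [Set.mem_iUnion] at this
    obtain ⟨k, hk⟩ := this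
    exact ⟨k, (mem_homCopy' hμ0 _ _).mp hk⟩
  choose F hF using hv
  choose G hG using hfc
  have Finj : Function.Injective F := by
    intro p q h
    by_contra hne
    have h1 := hF p
    have h2 := hF q
    rw [h] at h1
    have htri := tri (vtx' p.1 p.2) (vtx' q.1 q.2) (u (F q))
    have hd2 : 2 ≤ ∑ j, |vtx' p.1 p.2 j - vtx' q.1 q.2 j| := by
      apply vdist
      intro hpq
      exact hne (by rcases p with ⟨a, b⟩; rcases q with ⟨c, d⟩; exact hpq ▸ rfl)
    linarith
  have hdisj : ∀ (p : Fin 4 × Bool) (ε : Fin 4 → Bool), F p ≠ G ε := by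
    intro p ε h
    have h1 := hF p
    have h2 := hG ε
    rw [h] at h1
    have htri := tri (vtx' p.1 p.2) (fc' ε) (u (G ε))
    have := vfcdist p.1 p.2 ε
    linarith
  set t : Finset (Fin 11) := Finset.univ \ Finset.image F Finset.univ with ht
  have htcard : t.card = 3 := by
    rw [ht, Finset.card_sdiff_of_subset (Finset.subset_univ _),
      Finset.card_image_of_injective _ Finj]
    simp
  have hmaps : ∀ ε ∈ (Finset.univ : Finset (Fin 4 → Bool)), G ε ∈ t := by
    intro ε _
    rw [ht, Finset.mem_sdiff]
    refine ⟨Finset.mem_univ _, fun hmem => ?_⟩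
    rw [Finset.mem_image] at hmem
    obtain ⟨p, _, hp⟩ := hmem
    exact hdisj p ε hp
  have hcount : t.card * 5 < (Finset.univ : Finset (Fin 4 → Bool)).card := by
    rw [htcard, Finset.card_univ]
    simp
  obtain ⟨k, _, hk⟩ := Finset.exists_lt_card_fiber_of_mul_lt_card_of_maps_to hmaps hcount
  refine kleit6 (Finset.univ.filter fun ε => G ε = k) ?_ (by omega)
  intro ε hε δ hδ
  have hεk : G ε = k := (Finset.mem_filter.mp hε).2
  have hδk : G δ = k := (Finset.mem_filter.mp hδ).2
  have h1 := hG ε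
  have h2 := hG δ
  rw [hεk] at h1
  rw [hδk] at h2
  have htri := tri (fc' ε) (fc' δ) (u k)
  have hdd := fcdist ε δ
  have : (hd' ε δ : ℝ) < 3 := by linarith
  exact_mod_cast Nat.lt_succ_iff.mp (by exact_mod_cast this)

theorem stmt_13 :
    Covers 4 11 (3 / 4) ∧
    ∀ μ : ℝ, 0 < μ → μ < 3 / 4 → ¬ Covers 4 11 μ := by
  exact ⟨covers_ub, lb⟩
end

section
/- For every integer d ≥ 4 and λ = (2d−3)/(2d−1): the facet F = {x ∈ K^d : x₁ + … + x_d = 1, x_i ≥ 0} of K^d is covered by the d + 1 translates λK^d + (2/(2d−1))e_i (i = 1,…,d) together with λK^d + (1.5/(2d−1), 1.5/(2d−1), 0, …, 0); in particular, each of the points n_i = (2/(2d−1), …, 2/(2d−1), 1/(2d−1), 2/(2d−1), …, 2/(2d−1)) (with 1/(2d−1) in the i-th coordinate) satisfies ‖(1.5/(2d−1), 1.5/(2d−1), 0, …, 0) − n_i‖₁ ≤ (2d−3)/(2d−1). -/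
open scoped BigOperators

lemma mem_homCopy'_s18 (d : ℕ) (lam : ℝ) (hlam : 0 < lam) (u x : Fin d → ℝ)
    (h : ∑ i, |x i - u i| ≤ lam) : x ∈ homCopy d lam u := by
  refine ⟨fun j => (x j - u j) / lam, ?_, ?_⟩
  · show ∑ i, |(x i - u i) / lam| ≤ 1
    have he : ∀ i ∈ Finset.univ, |(x i - u i) / lam| = |x i - u i| / lam := by
      intro i _
      rw [abs_div, abs_of_pos hlam]
    rw [Finset.sum_congr rfl he, ← Finset.sum_div, div_le_one hlam]
    exact h
  · funext j
    simp only [Pi.add_apply, Pi.smul_apply, smul_eq_mul]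
    field_simp
    ring

theorem stmt_18 (d : ℕ) (hd : 4 ≤ d)
    (lam : ℝ) (hlam : lam = (2 * (d : ℝ) - 3) / (2 * (d : ℝ) - 1))
    (v : Fin d → ℝ)
    (hv : v = fun j =>
      if j = (⟨0, by omega⟩ : Fin d) then 1.5 / (2 * (d : ℝ) - 1)
      else if j = (⟨1, by omega⟩ : Fin d) then 1.5 / (2 * (d : ℝ) - 1)
      else 0) :
    ({x ∈ cross d | (∑ i, x i) = 1 ∧ ∀ i, 0 ≤ x i} ⊆
      (⋃ i : Fin d, homCopy d lam ((2 / (2 * (d : ℝ) - 1)) • (Pi.single i 1 : Fin d → ℝ))) ∪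
      homCopy d lam v) ∧
    ∀ i : Fin d,
      (∑ j, |v j - (if j = i then 1 / (2 * (d : ℝ) - 1) else 2 / (2 * (d : ℝ) - 1))|)
        ≤ (2 * (d : ℝ) - 3) / (2 * (d : ℝ) - 1) := by
  have hd4 : (4:ℝ) ≤ (d:ℝ) := by exact_mod_cast hd
  have hD : (0:ℝ) < 2*(d:ℝ)-1 := by linarith
  have hDne : (2*(d:ℝ)-1) ≠ 0 := ne_of_gt hD
  have hinv : (0:ℝ) < (2*(d:ℝ)-1)⁻¹ := by positivity
  have hlam0 : (0:ℝ) < lam := by rw [hlam]; apply div_pos <;> linarith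
  have hlam' : lam = 1 - 2/(2*(d:ℝ)-1) := by rw [hlam]; field_simp; ring
  have h15 : (1.5:ℝ) = 3/2 := by norm_num
  rw [h15] at hv
  have h0d : 0 < d := by omega
  have h1d : 1 < d := by omega
  set i0 : Fin d := ⟨0, h0d⟩ with hi0
  set i1 : Fin d := ⟨1, h1d⟩ with hi1
  have hne01 : i0 ≠ i1 := by simp [hi0, hi1, Fin.ext_iff]
  have hv0 : v i0 = (3/2) / (2*(d:ℝ)-1) := by rw [hv]; simp [hi0]
  have hv1 : v i1 = (3/2) / (2*(d:ℝ)-1) := by rw [hv]; simp [hi1, Fin.ext_iff]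
  have hvj : ∀ j : Fin d, j ≠ i0 → j ≠ i1 → v j = 0 := by
    intro j hj0 hj1
    rw [hv]
    simp only [if_neg hj0, if_neg hj1]
  constructor
  · rintro x ⟨hx, hsum, hpos⟩
    by_cases hex : ∃ i, 2/(2*(d:ℝ)-1) ≤ x i
    · obtain ⟨i, hi⟩ := hex
      left
      refine Set.mem_iUnion.2 ⟨i, mem_homCopy'_s18 _ _ hlam0 _ _ ?_⟩
      have hsub : ({i} : Finset (Fin d)) ⊆ Finset.univ := Finset.subset_univ _
      have e : ∑ j : Fin d, |x j - ((2/(2*(d:ℝ)-1)) • (Pi.single i 1 : Fin d → ℝ)) j|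
          = (∑ j ∈ Finset.univ \ {i}, x j) + (x i - 2/(2*(d:ℝ)-1)) := by
        rw [← Finset.sum_sdiff hsub, Finset.sum_singleton]
        have h1 : ∀ j ∈ Finset.univ \ {i},
            |x j - ((2/(2*(d:ℝ)-1)) • (Pi.single i 1 : Fin d → ℝ)) j| = x j := by
          intro j hj
          rw [Finset.mem_sdiff, Finset.mem_singleton] at hj
          rw [Pi.smul_apply, Pi.single_eq_of_ne hj.2, smul_zero, sub_zero,
            abs_of_nonneg (hpos j)]
        rw [Finset.sum_congr rfl h1, Pi.smul_apply, Pi.single_eq_same, smul_eq_mul, mul_one,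
          abs_of_nonneg (by linarith : (0:ℝ) ≤ x i - 2/(2*(d:ℝ)-1))]
      have hrest : ∑ j ∈ Finset.univ \ {i}, x j = 1 - x i := by
        have h2 := Finset.sum_sdiff hsub (f := x)
        rw [Finset.sum_singleton] at h2
        have h3 : (∑ j : Fin d, x j) = 1 := hsum
        linarith
      rw [e, hrest, hlam']
      linarith
    · push_neg at hex
      right
      refine mem_homCopy'_s18 _ _ hlam0 _ _ ?_
      have hsub : ({i0, i1} : Finset (Fin d)) ⊆ Finset.univ := Finset.subset_univ _
      have hcard : ((Finset.univ \ ({i0, i1} : Finset (Fin d))).card : ℝ) = (d:ℝ) - 2 := by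
        rw [Finset.card_sdiff_of_subset hsub, Finset.card_pair hne01, Finset.card_univ,
          Fintype.card_fin, Nat.cast_sub (by omega)]
        norm_num
      have hrest : ∑ j ∈ Finset.univ \ {i0, i1}, x j = 1 - x i0 - x i1 := by
        have h2 := Finset.sum_sdiff hsub (f := x)
        rw [Finset.sum_pair hne01] at h2
        have h3 : (∑ j : Fin d, x j) = 1 := hsum
        linarith
      have h3 : 3/(2*(d:ℝ)-1) ≤ x i0 + x i1 := by
        have hb : ∑ j ∈ Finset.univ \ {i0, i1}, x j
            ≤ ((Finset.univ \ ({i0, i1} : Finset (Fin d))).card : ℝ) * (2/(2*(d:ℝ)-1)) := by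
          calc ∑ j ∈ Finset.univ \ {i0, i1}, x j
              ≤ ∑ _j ∈ Finset.univ \ ({i0, i1} : Finset (Fin d)), 2/(2*(d:ℝ)-1) :=
                Finset.sum_le_sum fun j _ => (hex j).le
            _ = _ := by rw [Finset.sum_const, nsmul_eq_mul]
        rw [hcard, hrest] at hb
        have heq : 1 - ((d:ℝ)-2) * (2/(2*(d:ℝ)-1)) = 3/(2*(d:ℝ)-1) := by
          have hc : 2/(2*(d:ℝ)-1)*(2*(d:ℝ)-1) = 2 := div_mul_cancel₀ _ hDne
          rw [eq_div_iff hDne]; linear_combination (-((d:ℝ)-2)) * hc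
        linarith
      have e : ∑ j : Fin d, |x j - v j|
          = |x i0 - (3/2)/(2*(d:ℝ)-1)| + |x i1 - (3/2)/(2*(d:ℝ)-1)|
            + ∑ j ∈ Finset.univ \ {i0, i1}, x j := by
        rw [← Finset.sum_sdiff hsub, Finset.sum_pair hne01, hv0, hv1]
        have h1 : ∀ j ∈ Finset.univ \ ({i0, i1} : Finset (Fin d)), |x j - v j| = x j := by
          intro j hj
          rw [Finset.mem_sdiff, Finset.mem_insert, Finset.mem_singleton] at hj
          push_neg at hj
          rw [hvj j hj.2.1 hj.2.2, sub_zero, abs_of_nonneg (hpos j)]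
        rw [Finset.sum_congr rfl h1]
        ring
      rw [e, hrest, hlam']
      have hx0 := (hex i0).le
      have hx1 := (hex i1).le
      rcases abs_cases (x i0 - (3/2)/(2*(d:ℝ)-1)) with ⟨e0, s0⟩ | ⟨e0, s0⟩ <;>
        rcases abs_cases (x i1 - (3/2)/(2*(d:ℝ)-1)) with ⟨e1, s1⟩ | ⟨e1, s1⟩ <;>
        rw [e0, e1] <;> (ring_nf at hinv s0 s1 hx0 hx1 h3 ⊢; linarith)
  · intro i
    have key : ∀ j ∈ Finset.univ, |v j - (if j = i then 1/(2*(d:ℝ)-1) else 2/(2*(d:ℝ)-1))|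
        ≤ (if j = i0 then -((3/2)/(2*(d:ℝ)-1)) else 0)
          + (if j = i1 then -((3/2)/(2*(d:ℝ)-1)) else 0) + 2/(2*(d:ℝ)-1) := by
      intro j _
      rcases eq_or_ne j i0 with hj0 | hj0
      · subst hj0
        rw [hv0, if_pos rfl, if_neg hne01]
        by_cases hji : i0 = i
        · rw [if_pos hji, abs_le]
          constructor <;> (ring_nf at hinv ⊢; linarith)
        · rw [if_neg hji, abs_le]
          constructor <;> (ring_nf at hinv ⊢; linarith)
      · rw [if_neg hj0]
        rcases eq_or_ne j i1 with hj1 | hj1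
        · subst hj1
          rw [hv1, if_pos rfl]
          by_cases hji : i1 = i
          · rw [if_pos hji, abs_le]
            constructor <;> (ring_nf at hinv ⊢; linarith)
          · rw [if_neg hji, abs_le]
            constructor <;> (ring_nf at hinv ⊢; linarith)
        · rw [if_neg hj1, hvj j hj0 hj1]
          by_cases hji : j = i
          · rw [if_pos hji, abs_le]
            constructor <;> (ring_nf at hinv ⊢; linarith)
          · rw [if_neg hji, abs_le]
            constructor <;> (ring_nf at hinv ⊢; linarith)
    calc ∑ j : Fin d, |v j - (if j = i then 1/(2*(d:ℝ)-1) else 2/(2*(d:ℝ)-1))|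
        ≤ ∑ j : Fin d, ((if j = i0 then -((3/2)/(2*(d:ℝ)-1)) else 0)
          + (if j = i1 then -((3/2)/(2*(d:ℝ)-1)) else 0) + 2/(2*(d:ℝ)-1)) :=
          Finset.sum_le_sum key
      _ = -((3/2)/(2*(d:ℝ)-1)) + -((3/2)/(2*(d:ℝ)-1)) + (d:ℝ) * (2/(2*(d:ℝ)-1)) := by
          rw [Finset.sum_add_distrib, Finset.sum_add_distrib,
            Finset.sum_ite_eq' Finset.univ i0 (fun _ => -((3/2)/(2*(d:ℝ)-1))),
            Finset.sum_ite_eq' Finset.univ i1 (fun _ => -((3/2)/(2*(d:ℝ)-1))),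
            Finset.sum_const, Finset.card_univ, Fintype.card_fin, nsmul_eq_mul]
          simp
      _ ≤ (2 * (d : ℝ) - 3) / (2 * (d : ℝ) - 1) := by
          apply le_of_eq
          field_simp
          ring
end
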